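/- Let μ > 0, β > 0, h > 0, and set ρ = exp(βh/μ). If a real number τ satisfies the identity (μ + τβ²)·(ρ + ρ⁻¹ − 2) = (βh/2)·(ρ − ρ⁻¹), then necessarily τ = (h/(2β))·(coth(Pe) − 1/Pe) with Pe = βh/(2μ). That is, the stabilization parameter yielding nodal exactness of the 1D linear-FE SUPG scheme is unique and equals the theoretical value τ̃₁. -/

import Mathlib

open Real

/-- The hyperbolic cotangent, `coth θ = cosh θ / sinh θ`. -/
noncomputable def coth (θ : ℝ) : ℝ := Real.cosh θ / Real.sinh θ

lemma exp_two_mul_add_inv_sub_two (x : ℝ) :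
    rexp (2 * x) + (rexp (2 * x))⁻¹ - 2 = 4 * sinh x ^ 2 := by
  rw [← exp_neg, show rexp (2 * x) + rexp (-(2 * x)) = 2 * cosh (2 * x) by rw [cosh_eq]; ring,
    cosh_two_mul, cosh_sq]
  ring

lemma exp_two_mul_sub_inv (x : ℝ) :
    rexp (2 * x) - (rexp (2 * x))⁻¹ = 4 * sinh x * cosh x := by
  rw [← exp_neg, show rexp (2 * x) - rexp (-(2 * x)) = 2 * sinh (2 * x) by rw [sinh_eq]; ring,
    sinh_two_mul]
  ring

/-- With `ρ = exp (2θ)`, the amplification-factor identity `a (ρ + ρ⁻¹ - 2) = b (ρ - ρ⁻¹)`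
is `4 sinh θ (a sinh θ - b cosh θ) = 0`. -/
lemma mul_exp_two_mul_add_inv_sub_two_eq_iff {a b θ : ℝ} (hθ : θ ≠ 0) :
    a * (rexp (2 * θ) + (rexp (2 * θ))⁻¹ - 2) = b * (rexp (2 * θ) - (rexp (2 * θ))⁻¹) ↔
      a = b * coth θ := by
  have hsinh : sinh θ ≠ 0 := sinh_ne_zero.mpr hθ
  rw [exp_two_mul_add_inv_sub_two, exp_two_mul_sub_inv, coth, mul_div_assoc', eq_div_iff hsinh]
  constructor <;> intro h
  · exact mul_left_cancel₀ (by positivity : (4 * sinh θ : ℝ) ≠ 0) (by linear_combination h)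
  · linear_combination 4 * sinh θ * h

/-- Uniqueness of the nodally exact stabilization parameter: for
μ, β, h > 0 and `ρ = exp(βh/μ)`, any real τ satisfying
`(μ + τβ²)(ρ + ρ⁻¹ − 2) = (βh/2)(ρ − ρ⁻¹)` must equal the theoretical value
`τ̃₁ = (h/(2β))·(coth Pe − 1/Pe)` with `Pe = βh/(2μ)`. -/
theorem stmt_8 (μ β h : ℝ) (hμ : 0 < μ) (hβ : 0 < β) (hh : 0 < h) (τ : ℝ)
    (hτ : (μ + τ * β ^ 2) * (Real.exp (β * h / μ) + (Real.exp (β * h / μ))⁻¹ - 2)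
        = (β * h / 2) * (Real.exp (β * h / μ) - (Real.exp (β * h / μ))⁻¹)) :
    τ = h / (2 * β) * (coth (β * h / (2 * μ)) - 1 / (β * h / (2 * μ))) := by
  set θ := β * h / (2 * μ) with hθ
  have hρ : β * h / μ = 2 * θ := by rw [hθ]; field_simp
  rw [hρ, mul_exp_two_mul_add_inv_sub_two_eq_iff (by positivity)] at hτ
  have hcoth : coth θ = 2 * (μ + τ * β ^ 2) / (β * h) := by
    rw [hτ]
    field_simp
  rw [hcoth, hθ]
  field_simp
  ring
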